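/- Every Carmichael number has at least three distinct prime factors: if n is a composite natural number such that a^(n−1) ≡ 1 (mod n) for every integer a coprime to n, then the number of distinct prime divisors of n is at least 3. -/

import Mathlib

/-!
If `a ^ (n - 1) ≡ 1` for every `a` coprime to `n`, then the Carmichael function `λ n`, the exponent
of `(ZMod n)ˣ`, divides `n - 1`, and hence so does `λ m` for every `m ∣ n`. Taking `m = p ^ 2`, whose
unit group has an element of order `p`, gives `p ∣ n - 1`, impossible when `p ∣ n`; so `n` is
squarefree. Taking `m = p` gives `p - 1 ∣ n - 1` (Korselt). A squarefree composite number with at most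
two prime factors is `p * q` with `p < q`, and then `q - 1 ∣ p * q - 1 = p * (q - 1) + (p - 1)` would
force `q - 1 ∣ p - 1`, which is too small.
-/

namespace ArithmeticFunction

theorem carmichael_dvd_sub_one {n : ℕ}
    (h : ∀ a : ℤ, IsCoprime a n → a ^ (n - 1) ≡ 1 [ZMOD n]) : carmichael n ∣ n - 1 := by
  rcases eq_or_ne n 0 with rfl | hn
  · simp -- `λ 0 = 0` and `0 - 1 = 0`
  rw [carmichael_eq_exponent hn]
  refine Monoid.exponent_dvd_of_forall_pow_eq_one fun u ↦ Units.ext ?_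
  have hu : (((u : ZMod n).cast : ℤ) : ZMod n) = u := ZMod.intCast_zmod_cast _
  have hcop : IsCoprime ((u : ZMod n).cast : ℤ) n :=
    ((ZMod.coe_int_isUnit_iff_isCoprime _ n).mp (by rw [hu]; exact u.isUnit)).symm
  have := (ZMod.intCast_eq_intCast_iff _ _ _).mpr (h _ hcop)
  push_cast [hu] at this
  exact this

theorem carmichael_prime {p : ℕ} (hp : p.Prime) : carmichael p = p - 1 := by
  have : Fact p.Prime := ⟨hp⟩
  rw [carmichael_eq_exponent hp.ne_zero, IsCyclic.exponent_eq_card, Nat.card_eq_fintype_card,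
    ZMod.card_units]

theorem prime_dvd_carmichael_sq {p : ℕ} (hp : p.Prime) : p ∣ carmichael (p ^ 2) := by
  have : Fact p.Prime := ⟨hp⟩
  have hcard : p ∣ Nat.card (ZMod (p ^ 2))ˣ := by
    rw [Nat.card_eq_fintype_card, ZMod.card_units_eq_totient, Nat.totient_prime_pow_succ hp,
      pow_one]
    exact dvd_mul_right p _
  obtain ⟨g, hg⟩ := exists_prime_orderOf_dvd_card' p hcard
  rw [carmichael_eq_exponent (pow_ne_zero 2 hp.ne_zero)]
  exact hg.symm.dvd.trans (Monoid.order_dvd_exponent g)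

end ArithmeticFunction

open ArithmeticFunction

theorem squarefree_of_carmichael_dvd_sub_one {n : ℕ} (hn : n ≠ 0) (h : carmichael n ∣ n - 1) :
    Squarefree n := by
  refine Nat.squarefree_iff_prime_squarefree.mpr fun p hp hpp ↦ hp.one_lt.ne' ?_
  have hpn : p ∣ n := (dvd_mul_right p p).trans hpp
  have hpn1 : p ∣ n - 1 :=
    (prime_dvd_carmichael_sq hp).trans ((carmichael_dvd (sq p ▸ hpp)).trans h)
  simpa [Nat.sub_sub_self (Nat.one_le_iff_ne_zero.mpr hn)] using Nat.dvd_sub hpn hpn1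

theorem sub_one_dvd_sub_one_of_carmichael_dvd {n p : ℕ} (h : carmichael n ∣ n - 1) (hp : p.Prime)
    (hpn : p ∣ n) : p - 1 ∣ n - 1 :=
  carmichael_prime hp ▸ (carmichael_dvd hpn).trans h

theorem Squarefree.exists_mul_eq_of_card_primeFactors_eq_two {n : ℕ} (hn : Squarefree n)
    (h : n.primeFactors.card = 2) : ∃ p q, p.Prime ∧ q.Prime ∧ p < q ∧ n = p * q := by
  obtain ⟨p, q, hne, hpq⟩ := Finset.card_eq_two.mp h
  have hp : p.Prime := Nat.prime_of_mem_primeFactors (hpq ▸ Finset.mem_insert_self p {q})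
  have hq : q.Prime := Nat.prime_of_mem_primeFactors (hpq ▸ Finset.mem_insert_of_mem
    (Finset.mem_singleton_self q))
  have hn : n = p * q := by
    rw [← Nat.prod_primeFactors_of_squarefree hn, hpq, Finset.prod_pair hne]
  rcases hne.lt_or_gt with hlt | hlt
  · exact ⟨p, q, hp, hq, hlt, hn⟩
  · exact ⟨q, p, hq, hp, hlt, hn.trans (mul_comm p q)⟩

theorem not_sub_one_dvd_mul_sub_one {p q : ℕ} (hp : 2 ≤ p) (hpq : p < q) :
    ¬ q - 1 ∣ p * q - 1 := by
  intro h
  have hsplit : p * q - 1 = p * (q - 1) + (p - 1) := by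
    zify [(by nlinarith : 1 ≤ p * q), (by omega : 1 ≤ q), (by omega : 1 ≤ p)]
    ring
  have hdvd : q - 1 ∣ p - 1 := (Nat.dvd_add_right (dvd_mul_left _ _)).mp (hsplit ▸ h)
  have := Nat.le_of_dvd (by omega) hdvd
  omega

theorem carmichael_three_prime_factors (n : ℕ) (hn : 2 ≤ n) (hcomp : ¬ n.Prime)
    (hcar : ∀ a : ℤ, IsCoprime a (n : ℤ) → a ^ (n - 1) ≡ 1 [ZMOD (n : ℤ)]) :
    3 ≤ n.primeFactors.card := by
  have hdvd := carmichael_dvd_sub_one hcar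
  have hsf := squarefree_of_carmichael_dvd_sub_one (by omega) hdvd
  by_contra! hlt
  interval_cases h : n.primeFactors.card
  · rw [Finset.card_eq_zero, Nat.primeFactors_eq_empty] at h
    omega
  · exact hcomp <| Nat.squarefree_and_prime_pow_iff_prime.mp
      ⟨hsf, isPrimePow_iff_card_primeFactors_eq_one.mpr h⟩
  · obtain ⟨p, q, hp, hq, hpq, rfl⟩ := hsf.exists_mul_eq_of_card_primeFactors_eq_two h
    exact not_sub_one_dvd_mul_sub_one hp.two_le hpq
      (sub_one_dvd_sub_one_of_carmichael_dvd hdvd hq (dvd_mul_left q p))
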